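/- (Theorem 3.5, general isentropic case.) Let (ρ, u) be a smooth (C^∞) solution of the steady isentropic compressible Euler equations on U with ρ > 0 and u₁ > 0 everywhere (so B(x) − h(t) ≥ |u(x)|²/2 > 0 for 0 ≤ t ≤ ρ(x)). Define K₁ = G^{-1/2}, K₂ = β₂K₁, K₃ = β₃K₁ and, for x ∈ U, I(x) = exp(∫₀^{ρ(x)} t^{γ-2}/(2(B(x) − h(t))) dt). Then the conservation law ∂₁(ρK₁/I) + ∂₂(ρK₂/I) + ∂₃(ρK₃/I) = 0 holds on U. -/

import Mathlib

/-- Partial derivative in direction `i` of a scalar function on `ℝ³`. -/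
noncomputable def pd (i : Fin 3) (f : (Fin 3 → ℝ) → ℝ) (x : Fin 3 → ℝ) : ℝ :=
  fderiv ℝ f x (Pi.single i 1)

lemma pd_congr_nhds {f g : (Fin 3 → ℝ) → ℝ} {x : Fin 3 → ℝ} (h : f =ᶠ[nhds x] g)
    (i : Fin 3) : pd i f x = pd i g x := by
  unfold pd; rw [h.fderiv_eq]

lemma pd_of_hasFDerivAt {f : (Fin 3 → ℝ) → ℝ} {f' : (Fin 3 → ℝ) →L[ℝ] ℝ} {x : Fin 3 → ℝ}
    (h : HasFDerivAt f f' x) (i : Fin 3) : pd i f x = f' (Pi.single i 1) := by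
  unfold pd; rw [h.fderiv]

lemma pd_mul {f g : (Fin 3 → ℝ) → ℝ} {x : Fin 3 → ℝ} (hf : DifferentiableAt ℝ f x)
    (hg : DifferentiableAt ℝ g x) (k : Fin 3) :
    pd k (fun y => f y * g y) x = pd k f x * g x + f x * pd k g x := by
  unfold pd
  rw [(hf.hasFDerivAt.fun_mul hg.hasFDerivAt).fderiv]
  simp [smul_eq_mul]
  ring

lemma pd_mul3 {f g h : (Fin 3 → ℝ) → ℝ} {x : Fin 3 → ℝ} (hf : DifferentiableAt ℝ f x)
    (hg : DifferentiableAt ℝ g x) (hh : DifferentiableAt ℝ h x) (k : Fin 3) :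
    pd k (fun y => f y * g y * h y) x
      = pd k f x * g x * h x + f x * pd k g x * h x + f x * g x * pd k h x := by
  unfold pd
  rw [((hf.hasFDerivAt.fun_mul hg.hasFDerivAt).fun_mul hh.hasFDerivAt).fderiv]
  simp [smul_eq_mul]
  ring

lemma pd_rpow_div {f : (Fin 3 → ℝ) → ℝ} {x : Fin 3 → ℝ} (hf : DifferentiableAt ℝ f x)
    (hfx : f x ≠ 0) (p c : ℝ) (k : Fin 3) :
    pd k (fun y => f y ^ p / c) x = p * f x ^ (p - 1) * pd k f x / c := by
  have hfun : (fun y => f y ^ p / c) = (fun y => c⁻¹ * f y ^ p) := by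
    funext y; rw [div_eq_inv_mul]
  unfold pd
  rw [hfun, ((hf.hasFDerivAt.rpow_const (Or.inl hfx)).const_mul c⁻¹).fderiv]
  simp [smul_eq_mul]
  ring

lemma exp_half_log {z : ℝ} (hz : 0 < z) : Real.exp (Real.log z / 2) = Real.sqrt z := by
  rw [Real.sqrt_eq_rpow, Real.rpow_def_of_pos hz]
  ring_nf

lemma integral_eval {γ Bv r : ℝ} (hγ1 : 1 < γ) (hγ3 : γ < 3) (hr : 0 < r)
    (hW : 0 < Bv - r ^ (γ - 1) / (γ - 1)) :
    ∫ t in (0:ℝ)..r, t ^ (γ - 2) / (2 * (Bv - t ^ (γ - 1) / (γ - 1)))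
      = (Real.log Bv - Real.log (Bv - r ^ (γ - 1) / (γ - 1))) / 2 := by
  have hγ1' : (0:ℝ) < γ - 1 := by linarith
  have hmono : ∀ t ∈ Set.Icc (0:ℝ) r, 0 < Bv - t ^ (γ - 1) / (γ - 1) := by
    intro t ht
    have h1 : t ^ (γ - 1) ≤ r ^ (γ - 1) := Real.rpow_le_rpow ht.1 ht.2 hγ1'.le
    have h2 : t ^ (γ - 1) / (γ - 1) ≤ r ^ (γ - 1) / (γ - 1) := by gcongr
    linarith
  have hcontpow : Continuous (fun t : ℝ => t ^ (γ - 1)) := by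
    apply continuous_iff_continuousAt.2
    intro t
    exact Real.continuousAt_rpow_const t _ (Or.inr hγ1'.le)
  have hg : Continuous (fun t : ℝ => Bv - t ^ (γ - 1) / (γ - 1)) :=
    continuous_const.sub (hcontpow.div_const _)
  have hcont : ContinuousOn (fun t => -(Real.log (Bv - t ^ (γ - 1) / (γ - 1)) / 2))
      (Set.Icc 0 r) := by
    apply ContinuousOn.neg
    apply ContinuousOn.div_const
    exact ContinuousOn.log hg.continuousOn (fun t ht => (hmono t ht).ne')
  have hderiv : ∀ t ∈ Set.Ioo (0:ℝ) r,
      HasDerivAt (fun t => -(Real.log (Bv - t ^ (γ - 1) / (γ - 1)) / 2))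
        (t ^ (γ - 2) / (2 * (Bv - t ^ (γ - 1) / (γ - 1)))) t := by
    intro t ht
    have htpos : 0 < t := ht.1
    have h1 : HasDerivAt (fun s : ℝ => s ^ (γ - 1)) ((γ - 1) * t ^ (γ - 1 - 1)) t :=
      Real.hasDerivAt_rpow_const (Or.inl htpos.ne')
    have h2 : HasDerivAt (fun s : ℝ => Bv - s ^ (γ - 1) / (γ - 1))
        (0 - (γ - 1) * t ^ (γ - 1 - 1) / (γ - 1)) t :=
      (hasDerivAt_const t Bv).sub (h1.div_const _)
    have hgt : 0 < Bv - t ^ (γ - 1) / (γ - 1) := hmono t ⟨ht.1.le, ht.2.le⟩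
    have h3 := ((h2.log hgt.ne').div_const 2).fun_neg
    refine h3.congr_deriv ?_
    rw [show γ - 1 - 1 = γ - 2 by ring]
    field_simp
    ring
  have hint : IntervalIntegrable (fun t => t ^ (γ - 2) / (2 * (Bv - t ^ (γ - 1) / (γ - 1))))
      MeasureTheory.volume 0 r := by
    have h1 : IntervalIntegrable (fun t : ℝ => t ^ (γ - 2)) MeasureTheory.volume 0 r :=
      intervalIntegral.intervalIntegrable_rpow' (by linarith)
    have h2 := h1.mul_continuousOn (g := fun t => (2 * (Bv - t ^ (γ - 1) / (γ - 1)))⁻¹) ?_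
    · simpa [div_eq_mul_inv] using h2
    · rw [Set.uIcc_of_le hr.le]
      apply ContinuousOn.inv₀ (continuous_const.mul hg).continuousOn
      intro t ht
      have := hmono t ht
      exact mul_ne_zero two_ne_zero this.ne'
  rw [intervalIntegral.integral_eq_sub_of_hasDerivAt_of_le hr.le hcont hderiv hint]
  rw [Real.zero_rpow (by intro h; linarith [sub_eq_zero.1 h] : γ - 1 ≠ 0)]
  ring_nf

/-- auxiliary smooth function equal to the Bernoulli function. -/
noncomputable def Qfun (γ : ℝ) (ρ : (Fin 3 → ℝ) → ℝ) (u : Fin 3 → (Fin 3 → ℝ) → ℝ) :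
    (Fin 3 → ℝ) → ℝ :=
  fun y => 2⁻¹ * (u 0 y * u 0 y + u 1 y * u 1 y + u 2 y * u 2 y) + (γ - 1)⁻¹ * ρ y ^ (γ - 1)

/-- Theorem 3.5, general isentropic case: the conservation law
`div(ρ K / I) = 0` with the point-dependent integrating factor
`I(x) = exp(∫₀^{ρ(x)} t^(γ-2)/(2(B(x) − h(t))) dt)`. -/
theorem general_isentropic_conservation_law
    (U : Set (Fin 3 → ℝ)) (hU : IsOpen U) (γ : ℝ) (hγ1 : 1 < γ) (hγ3 : γ < 3)
    (ρ : (Fin 3 → ℝ) → ℝ) (u : Fin 3 → (Fin 3 → ℝ) → ℝ)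
    (hρ : ContDiffOn ℝ (⊤ : ℕ∞) ρ U) (hu : ∀ i, ContDiffOn ℝ (⊤ : ℕ∞) (u i) U)
    (hρpos : ∀ x ∈ U, 0 < ρ x) (hu1pos : ∀ x ∈ U, 0 < u 0 x)
    (hmass : ∀ x ∈ U,
      pd 0 (fun y => ρ y * u 0 y) x + pd 1 (fun y => ρ y * u 1 y) x
        + pd 2 (fun y => ρ y * u 2 y) x = 0)
    (hmom : ∀ i : Fin 3, ∀ x ∈ U,
      pd 0 (fun y => ρ y * u i y * u 0 y) x + pd 1 (fun y => ρ y * u i y * u 1 y) x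
        + pd 2 (fun y => ρ y * u i y * u 2 y) x + pd i (fun y => ρ y ^ γ / γ) x = 0)
    (β₂ β₃ G B K₁ K₂ K₃ I : (Fin 3 → ℝ) → ℝ)
    (hβ₂ : β₂ = fun y => u 1 y / u 0 y) (hβ₃ : β₃ = fun y => u 2 y / u 0 y)
    (hG : G = fun y => 1 + β₂ y ^ 2 + β₃ y ^ 2)
    (hB : B = fun y => (u 0 y ^ 2 + u 1 y ^ 2 + u 2 y ^ 2) / 2 + ρ y ^ (γ - 1) / (γ - 1))
    (hK₁ : K₁ = fun y => (Real.sqrt (G y))⁻¹)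
    (hK₂ : K₂ = fun y => β₂ y * K₁ y) (hK₃ : K₃ = fun y => β₃ y * K₁ y)
    (hI : I = fun y =>
      Real.exp (∫ t in (0:ℝ)..(ρ y), t ^ (γ - 2) / (2 * (B y - t ^ (γ - 1) / (γ - 1))))) :
    ∀ x ∈ U,
      pd 0 (fun y => ρ y * K₁ y / I y) x + pd 1 (fun y => ρ y * K₂ y / I y) x
        + pd 2 (fun y => ρ y * K₃ y / I y) x = 0 := by
  have hγ1' : (0:ℝ) < γ - 1 := by linarith
  -- pointwise rewriting of the flux in terms of `Qfun`
  have hIval : ∀ y ∈ U, I y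
      = Real.sqrt ((u 0 y ^ 2 + u 1 y ^ 2 + u 2 y ^ 2) / 2 + ρ y ^ (γ - 1) / (γ - 1))
        / Real.sqrt ((u 0 y ^ 2 + u 1 y ^ 2 + u 2 y ^ 2) / 2) := by
    intro y hy
    have ha := hu1pos y hy
    have hry := hρpos y hy
    have hq2 : 0 < u 0 y ^ 2 + u 1 y ^ 2 + u 2 y ^ 2 := by nlinarith
    have hrp : 0 < ρ y ^ (γ - 1) := Real.rpow_pos_of_pos hry _
    have hBv : 0 < (u 0 y ^ 2 + u 1 y ^ 2 + u 2 y ^ 2) / 2 + ρ y ^ (γ - 1) / (γ - 1) := by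
      have := div_pos hrp hγ1'
      linarith
    have hW : 0 < ((u 0 y ^ 2 + u 1 y ^ 2 + u 2 y ^ 2) / 2 + ρ y ^ (γ - 1) / (γ - 1))
        - ρ y ^ (γ - 1) / (γ - 1) := by linarith
    simp only [hI, hB]
    rw [integral_eval hγ1 hγ3 hry hW]
    rw [show (Real.log ((u 0 y ^ 2 + u 1 y ^ 2 + u 2 y ^ 2) / 2 + ρ y ^ (γ - 1) / (γ - 1))
        - Real.log ((u 0 y ^ 2 + u 1 y ^ 2 + u 2 y ^ 2) / 2 + ρ y ^ (γ - 1) / (γ - 1)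
          - ρ y ^ (γ - 1) / (γ - 1))) / 2
      = Real.log ((u 0 y ^ 2 + u 1 y ^ 2 + u 2 y ^ 2) / 2 + ρ y ^ (γ - 1) / (γ - 1)) / 2
        - Real.log ((u 0 y ^ 2 + u 1 y ^ 2 + u 2 y ^ 2) / 2 + ρ y ^ (γ - 1) / (γ - 1)
          - ρ y ^ (γ - 1) / (γ - 1)) / 2 by ring]
    rw [Real.exp_sub, exp_half_log hBv, exp_half_log hW]
    rw [show (u 0 y ^ 2 + u 1 y ^ 2 + u 2 y ^ 2) / 2 + ρ y ^ (γ - 1) / (γ - 1)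
        - ρ y ^ (γ - 1) / (γ - 1) = (u 0 y ^ 2 + u 1 y ^ 2 + u 2 y ^ 2) / 2 by ring]
  have hpt : ∀ k : Fin 3, ∀ K : (Fin 3 → ℝ) → ℝ,
      (∀ y ∈ U, K y = u k y / u 0 y * (Real.sqrt (G y))⁻¹) → ∀ y ∈ U,
      ρ y * K y / I y = ρ y * u k y * (Real.sqrt (2 * Qfun γ ρ u y))⁻¹ := by
    intro k K hK y hy
    have ha := hu1pos y hy
    have hry := hρpos y hy
    have hq2 : 0 < u 0 y ^ 2 + u 1 y ^ 2 + u 2 y ^ 2 := by nlinarith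
    have hrp : 0 < ρ y ^ (γ - 1) := Real.rpow_pos_of_pos hry _
    have hBv : 0 < (u 0 y ^ 2 + u 1 y ^ 2 + u 2 y ^ 2) / 2 + ρ y ^ (γ - 1) / (γ - 1) := by
      have := div_pos hrp hγ1'
      linarith
    rw [hIval y hy, hK y hy]
    simp only [hG, hβ₂, hβ₃]
    rw [show 1 + (u 1 y / u 0 y) ^ 2 + (u 2 y / u 0 y) ^ 2
        = (u 0 y ^ 2 + u 1 y ^ 2 + u 2 y ^ 2) / u 0 y ^ 2 by field_simp]
    rw [Real.sqrt_div hq2.le, Real.sqrt_sq ha.le]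
    rw [show 2 * Qfun γ ρ u y = 2 * ((u 0 y ^ 2 + u 1 y ^ 2 + u 2 y ^ 2) / 2
        + ρ y ^ (γ - 1) / (γ - 1)) by unfold Qfun; ring]
    rw [Real.sqrt_mul (by norm_num : (0:ℝ) ≤ 2), Real.sqrt_div hq2.le 2]
    have s2 : (0:ℝ) < Real.sqrt 2 := Real.sqrt_pos.2 (by norm_num)
    have sq2 : 0 < Real.sqrt (u 0 y ^ 2 + u 1 y ^ 2 + u 2 y ^ 2) := Real.sqrt_pos.2 hq2
    have sB : 0 < Real.sqrt ((u 0 y ^ 2 + u 1 y ^ 2 + u 2 y ^ 2) / 2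
        + ρ y ^ (γ - 1) / (γ - 1)) := Real.sqrt_pos.2 hBv
    field_simp
  intro x hx
  have hxU : U ∈ nhds x := hU.mem_nhds hx
  have hρd : DifferentiableAt ℝ ρ x := (hρ.contDiffAt hxU).differentiableAt (by simp)
  have hud : ∀ i, DifferentiableAt ℝ (u i) x :=
    fun i => ((hu i).contDiffAt hxU).differentiableAt (by simp)
  have hr : 0 < ρ x := hρpos x hx
  have hu0 : 0 < u 0 x := hu1pos x hx
  -- replace the flux functions
  have hpt0 := hpt 0 K₁ (fun y hy => by
    have := (hu1pos y hy).ne'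
    rw [hK₁]; field_simp)
  have hpt1 := hpt 1 K₂ (fun y _ => by rw [hK₂, hβ₂]; simp [hK₁])
  have hpt2 := hpt 2 K₃ (fun y _ => by rw [hK₃, hβ₃]; simp [hK₁])
  rw [pd_congr_nhds (Filter.eventuallyEq_of_mem hxU
    (fun y hy => hpt0 y hy : Set.EqOn _ _ U)) 0]
  rw [pd_congr_nhds (Filter.eventuallyEq_of_mem hxU
    (fun y hy => hpt1 y hy : Set.EqOn _ _ U)) 1]
  rw [pd_congr_nhds (Filter.eventuallyEq_of_mem hxU
    (fun y hy => hpt2 y hy : Set.EqOn _ _ U)) 2]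
  -- expanded mass conservation
  have hmassX : (pd 0 ρ x * u 0 x + ρ x * pd 0 (u 0) x)
      + (pd 1 ρ x * u 1 x + ρ x * pd 1 (u 1) x)
      + (pd 2 ρ x * u 2 x + ρ x * pd 2 (u 2) x) = 0 := by
    have h := hmass x hx
    rw [pd_mul hρd (hud 0) 0, pd_mul hρd (hud 1) 1, pd_mul hρd (hud 2) 2] at h
    exact h
  have hrpow : ρ x ^ (γ - 1) = ρ x * ρ x ^ (γ - 2) := by
    rw [show γ - 1 = 1 + (γ - 2) by ring, Real.rpow_add hr, Real.rpow_one]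
  -- expanded momentum conservation : directional derivative of velocity
  have hmomX : ∀ i : Fin 3, u 0 x * pd 0 (u i) x + u 1 x * pd 1 (u i) x
      + u 2 x * pd 2 (u i) x = -(ρ x ^ (γ - 2) * pd i ρ x) := by
    intro i
    have h := hmom i x hx
    rw [pd_mul3 hρd (hud i) (hud 0) 0, pd_mul3 hρd (hud i) (hud 1) 1,
      pd_mul3 hρd (hud i) (hud 2) 2, pd_rpow_div hρd hr.ne' γ γ i] at h
    rw [show γ * ρ x ^ (γ - 1) * pd i ρ x / γ = ρ x ^ (γ - 1) * pd i ρ x by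
      field_simp] at h
    have h3 : ρ x * (u 0 x * pd 0 (u i) x + u 1 x * pd 1 (u i) x + u 2 x * pd 2 (u i) x)
        = ρ x * (-(ρ x ^ (γ - 2) * pd i ρ x)) := by
      linear_combination h - u i x * hmassX - pd i ρ x * hrpow
    exact mul_left_cancel₀ hr.ne' h3
  -- Bernoulli : u · ∇B = 0
  have huDB : u 0 x * (u 0 x * pd 0 (u 0) x + u 1 x * pd 0 (u 1) x + u 2 x * pd 0 (u 2) x
        + ρ x ^ (γ - 2) * pd 0 ρ x)
      + u 1 x * (u 0 x * pd 1 (u 0) x + u 1 x * pd 1 (u 1) x + u 2 x * pd 1 (u 2) x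
        + ρ x ^ (γ - 2) * pd 1 ρ x)
      + u 2 x * (u 0 x * pd 2 (u 0) x + u 1 x * pd 2 (u 1) x + u 2 x * pd 2 (u 2) x
        + ρ x ^ (γ - 2) * pd 2 ρ x) = 0 := by
    linear_combination u 0 x * hmomX 0 + u 1 x * hmomX 1 + u 2 x * hmomX 2
  -- derivative of Qfun and of the flux
  have hQx : 0 < Qfun γ ρ u x := by
    have h1 : 0 < ρ x ^ (γ - 1) := Real.rpow_pos_of_pos hr _
    have h2 : 0 < (γ - 1)⁻¹ * ρ x ^ (γ - 1) := by positivity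
    have h3 : 0 < u 0 x * u 0 x := mul_pos hu0 hu0
    unfold Qfun
    nlinarith [mul_self_nonneg (u 1 x), mul_self_nonneg (u 2 x)]
  have h2Q : 0 < 2 * Qfun γ ρ u x := by linarith
  have hs : 0 < Real.sqrt (2 * Qfun γ ρ u x) := Real.sqrt_pos.2 h2Q
  have hQ' : HasFDerivAt (Qfun γ ρ u) _ x :=
    ((((hud 0).hasFDerivAt.mul (hud 0).hasFDerivAt).add
        ((hud 1).hasFDerivAt.mul (hud 1).hasFDerivAt)).add
        ((hud 2).hasFDerivAt.mul (hud 2).hasFDerivAt)).const_mul (2:ℝ)⁻¹ |>.add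
      ((hρd.hasFDerivAt.rpow_const (Or.inl hr.ne')).const_mul (γ - 1)⁻¹)
  have hsq : HasFDerivAt (fun y => Real.sqrt (2 * Qfun γ ρ u y)) _ x :=
    (hQ'.const_mul (2:ℝ)).sqrt h2Q.ne'
  have hinv : HasFDerivAt (fun y => (Real.sqrt (2 * Qfun γ ρ u y))⁻¹) _ x :=
    (hasDerivAt_inv hs.ne').comp_hasFDerivAt x hsq
  have hg : ∀ k : Fin 3,
      pd k (fun y => ρ y * u k y * (Real.sqrt (2 * Qfun γ ρ u y))⁻¹) x
        = ((pd k ρ x * u k x + ρ x * pd k (u k) x) * Real.sqrt (2 * Qfun γ ρ u x) ^ 2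
            - ρ x * u k x * (u 0 x * pd k (u 0) x + u 1 x * pd k (u 1) x
              + u 2 x * pd k (u 2) x + ρ x ^ (γ - 2) * pd k ρ x))
          / Real.sqrt (2 * Qfun γ ρ u x) ^ 3 := by
    intro k
    have hgk : HasFDerivAt
        (fun y => ρ y * u k y * (Real.sqrt (2 * Qfun γ ρ u y))⁻¹) _ x :=
      (hρd.hasFDerivAt.fun_mul (hud k).hasFDerivAt).fun_mul hinv
    rw [pd_of_hasFDerivAt hgk k]
    simp only [ContinuousLinearMap.add_apply, ContinuousLinearMap.smul_apply,
      ContinuousLinearMap.coe_smul', Pi.smul_apply, smul_eq_mul]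
    rw [show γ - 1 - 1 = γ - 2 by ring]
    have hs2 : Real.sqrt (2 * Qfun γ ρ u x) ^ 2 = 2 * Qfun γ ρ u x :=
      Real.sq_sqrt h2Q.le
    field_simp [hs.ne']
    unfold pd
    ring
  rw [hg 0, hg 1, hg 2, ← add_div, ← add_div, div_eq_zero_iff]
  left
  linear_combination Real.sqrt (2 * Qfun γ ρ u x) ^ 2 * hmassX - ρ x * huDB
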